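/- arXiv:0905.4332 — 2 statements merged into one kernel-verified Lean document; each statement's English description precedes it below -/
import Mathlib

section
/- If L contains negation and for every class C ⊆ 𝓜 there exists an L-compact class C' satisfying exactly the same L-formulas as C, then L is compact (every finitely satisfiable set of L-formulas is satisfiable in 𝓜). -/
/-! Apply the hypothesis to the class of all models to get an `L`-compact class `C'` with the
same valid formulas. A formula `χ` satisfiable somewhere has a non-valid negation, which therefore
fails somewhere in `C'`, so `χ` is satisfiable in `C'`. Taking `χ` to be the conjunction of a finite
subset of `Sig`, finite satisfiability of `Sig` transfers to `C'`, and compactness of `C'` gives a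
model of `Sig`. -/

section

variable {𝓜 L : Type*} (sat : 𝓜 → L → Prop)

theorem exists_sat_iff_forall_mem_of_finset_nonempty
    (hand : ∀ φ ψ : L, ∃ χ : L, ∀ M, sat M χ ↔ (sat M φ ∧ sat M ψ))
    {Δ : Finset L} (hΔ : Δ.Nonempty) : ∃ χ : L, ∀ M, sat M χ ↔ ∀ φ ∈ Δ, sat M φ := by
  induction hΔ using Finset.Nonempty.cons_induction with
  | singleton a => exact ⟨a, by simp⟩
  | cons a s _ _ ih =>
    obtain ⟨χ, hχ⟩ := ih
    obtain ⟨χ', hχ'⟩ := hand a χ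
    exact ⟨χ', fun M => by simp [hχ', hχ]⟩

theorem exists_sat_iff_forall_mem_of_finite_nonempty
    (hand : ∀ φ ψ : L, ∃ χ : L, ∀ M, sat M χ ↔ (sat M φ ∧ sat M ψ))
    {Δ : Set L} (hfin : Δ.Finite) (hne : Δ.Nonempty) :
    ∃ χ : L, ∀ M, sat M χ ↔ ∀ φ ∈ Δ, sat M φ := by
  simpa using exists_sat_iff_forall_mem_of_finset_nonempty sat hand (hfin.toFinset_nonempty.2 hne)

variable {sat} {C C' : Set 𝓜}

theorem exists_mem_sat_of_theory_eq (hneg : ∀ φ : L, ∃ ψ : L, ∀ M, sat M ψ ↔ ¬ sat M φ)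
    (hsame : ∀ φ : L, (∀ M ∈ C, sat M φ) ↔ (∀ M ∈ C', sat M φ))
    {χ : L} (hχ : ∃ M ∈ C, sat M χ) : ∃ N ∈ C', sat N χ := by
  obtain ⟨ψ, hψ⟩ := hneg χ
  have hψ_not_valid : ¬ ∀ M ∈ C', sat M ψ := by
    rw [← hsame]
    obtain ⟨M, hM, hMχ⟩ := hχ
    exact fun hvalid => (hψ M).1 (hvalid M hM) hMχ
  push Not at hψ_not_valid
  obtain ⟨N, hN, hNψ⟩ := hψ_not_valid
  exact ⟨N, hN, not_not.1 fun hNχ => hNψ ((hψ N).2 hNχ)⟩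

theorem exists_mem_sat_all_of_theory_eq (hneg : ∀ φ : L, ∃ ψ : L, ∀ M, sat M ψ ↔ ¬ sat M φ)
    (hand : ∀ φ ψ : L, ∃ χ : L, ∀ M, sat M χ ↔ (sat M φ ∧ sat M ψ))
    (hsame : ∀ φ : L, (∀ M ∈ C, sat M φ) ↔ (∀ M ∈ C', sat M φ))
    {Δ : Set L} (hfin : Δ.Finite) (hne : Δ.Nonempty) (hΔ : ∃ M ∈ C, ∀ φ ∈ Δ, sat M φ) :
    ∃ N ∈ C', ∀ φ ∈ Δ, sat N φ := by
  obtain ⟨χ, hχ⟩ := exists_sat_iff_forall_mem_of_finite_nonempty sat hand hfin hne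
  simp only [← hχ] at hΔ ⊢
  exact exists_mem_sat_of_theory_eq hneg hsame hΔ

end

theorem compact_classes_imply_compact_logic
    {𝓜 L : Type*} (sat : 𝓜 → L → Prop)
    (hneg : ∀ φ : L, ∃ ψ : L, ∀ M, sat M ψ ↔ ¬ sat M φ)
    (hand : ∀ φ ψ : L, ∃ χ : L, ∀ M, sat M χ ↔ (sat M φ ∧ sat M ψ))
    (h : ∀ C : Set 𝓜, ∃ C' : Set 𝓜,
      (∀ Sig : Set L,
        (∀ Δ ⊆ Sig, Δ.Finite → ∃ M ∈ C', ∀ φ ∈ Δ, sat M φ) →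
        ∃ M ∈ C', ∀ φ ∈ Sig, sat M φ) ∧
      (∀ φ : L, (∀ M ∈ C, sat M φ) ↔ (∀ M ∈ C', sat M φ))) :
    ∀ Sig : Set L,
      (∀ Δ ⊆ Sig, Δ.Finite → ∃ M : 𝓜, ∀ φ ∈ Δ, sat M φ) →
      ∃ M : 𝓜, ∀ φ ∈ Sig, sat M φ := by
  intro Sig hSig
  rcases Sig.eq_empty_or_nonempty with rfl | ⟨φ₀, hφ₀⟩
  · obtain ⟨M, -⟩ := hSig ∅ le_rfl Set.finite_empty
    exact ⟨M, by simp⟩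
  obtain ⟨C', hcompact, hsame⟩ := h Set.univ
  -- `φ₀` is added so that the transferred finite set is nonempty, hence has a conjunction.
  have hSig' : ∀ Δ ⊆ Sig, Δ.Finite → ∃ M ∈ C', ∀ φ ∈ Δ, sat M φ := by
    intro Δ hΔ hfin
    have hsub : insert φ₀ Δ ⊆ Sig := Set.insert_subset hφ₀ hΔ
    obtain ⟨M, hM⟩ := hSig _ hsub (hfin.insert φ₀)
    obtain ⟨N, hN, hNsat⟩ := exists_mem_sat_all_of_theory_eq hneg hand hsame (hfin.insert φ₀)
      (Set.insert_nonempty φ₀ Δ) ⟨M, Set.mem_univ M, hM⟩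
    exact ⟨N, hN, fun φ hφ => hNsat φ (Set.mem_insert_of_mem φ₀ hφ)⟩
  obtain ⟨M, -, hM⟩ := hcompact Sig hSig'
  exact ⟨M, hM⟩
end

section
/- If M,s and N,t are bisimilar pointed Kripke models and N,t is modally saturated (m-saturated), then M,s is m-saturated. -/
/-!
Bisimilar worlds satisfy the same modal formulas, so a set of formulas is satisfiable at a
successor of `w` iff it is satisfiable at a successor of any world bisimilar to `w`; hence
saturation of the successors passes from `v` to `w`. Every world reachable from `s` is
bisimilar to one reachable from `t`, where saturation holds by assumption.
-/

/-- Kripke models over proposition letters `P`. -/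
structure Kripke (P : Type*) where
  W : Type*
  R : W → W → Prop
  V : W → P → Prop

/-- Basic modal formulas over proposition letters `P`. -/
inductive MF (P : Type*) where
  | tru : MF P
  | prop : P → MF P
  | neg : MF P → MF P
  | and : MF P → MF P → MF P
  | dia : MF P → MF P

/-- Satisfaction of basic modal formulas. -/
def msat {P : Type*} (K : Kripke P) : K.W → MF P → Prop
  | _, MF.tru => True
  | w, MF.prop p => K.V w p
  | w, MF.neg φ => ¬ msat K w φ
  | w, MF.and φ ψ => msat K w φ ∧ msat K w ψ
  | w, MF.dia φ => ∃ v, K.R w v ∧ msat K v φ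

/-- `Z` is a bisimulation between `K₁` and `K₂`. -/
def IsBisim {P : Type*} (K₁ K₂ : Kripke P) (Z : K₁.W → K₂.W → Prop) : Prop :=
  ∀ w v, Z w v →
    (∀ p : P, K₁.V w p ↔ K₂.V v p) ∧
    (∀ w', K₁.R w w' → ∃ v', K₂.R v v' ∧ Z w' v') ∧
    (∀ v', K₂.R v v' → ∃ w', K₁.R w w' ∧ Z w' v')

/-- The pointed model `K, s` is m-saturated. -/
def MSaturated {P : Type*} (K : Kripke P) (s : K.W) : Prop :=
  ∀ w : K.W, Relation.ReflTransGen K.R s w →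
    ∀ Sig : Set (MF P),
      (∀ Δ ⊆ Sig, Δ.Finite → ∃ u, K.R w u ∧ ∀ φ ∈ Δ, msat K u φ) →
      ∃ u, K.R w u ∧ ∀ φ ∈ Sig, msat K u φ

def SuccSaturated {P : Type*} (K : Kripke P) (w : K.W) : Prop :=
  ∀ Sig : Set (MF P),
    (∀ Δ ⊆ Sig, Δ.Finite → ∃ u, K.R w u ∧ ∀ φ ∈ Δ, msat K u φ) →
    ∃ u, K.R w u ∧ ∀ φ ∈ Sig, msat K u φ

namespace IsBisim

variable {P : Type*} {K₁ K₂ : Kripke P} {Z : K₁.W → K₂.W → Prop}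

theorem msat_iff (hZ : IsBisim K₁ K₂ Z) (φ : MF P) :
    ∀ {w v}, Z w v → (msat K₁ w φ ↔ msat K₂ v φ) := by
  induction φ with
  | tru => exact fun _ => Iff.rfl
  | prop p => exact fun h => (hZ _ _ h).1 p
  | neg φ ih => exact fun h => not_congr (ih h)
  | and φ ψ ihφ ihψ => exact fun h => and_congr (ihφ h) (ihψ h)
  | dia φ ih =>
    intro w v h
    constructor
    · rintro ⟨w', hww', hw'⟩
      obtain ⟨v', hvv', hZ'⟩ := (hZ w v h).2.1 w' hww'
      exact ⟨v', hvv', (ih hZ').1 hw'⟩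
    · rintro ⟨v', hvv', hv'⟩
      obtain ⟨w', hww', hZ'⟩ := (hZ w v h).2.2 v' hvv'
      exact ⟨w', hww', (ih hZ').2 hv'⟩

theorem exists_succ_sat_iff (hZ : IsBisim K₁ K₂ Z) {w : K₁.W} {v : K₂.W} (h : Z w v)
    (Sig : Set (MF P)) :
    (∃ u, K₁.R w u ∧ ∀ φ ∈ Sig, msat K₁ u φ) ↔ ∃ u, K₂.R v u ∧ ∀ φ ∈ Sig, msat K₂ u φ := by
  constructor
  · rintro ⟨u, hwu, hu⟩
    obtain ⟨u', hvu', hZ'⟩ := (hZ w v h).2.1 u hwu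
    exact ⟨u', hvu', fun φ hφ => (hZ.msat_iff φ hZ').1 (hu φ hφ)⟩
  · rintro ⟨u', hvu', hu'⟩
    obtain ⟨u, hwu, hZ'⟩ := (hZ w v h).2.2 u' hvu'
    exact ⟨u, hwu, fun φ hφ => (hZ.msat_iff φ hZ').2 (hu' φ hφ)⟩

theorem succSaturated (hZ : IsBisim K₁ K₂ Z) {w : K₁.W} {v : K₂.W} (h : Z w v)
    (hv : SuccSaturated K₂ v) : SuccSaturated K₁ w := fun Sig hfin =>
  (hZ.exists_succ_sat_iff h Sig).2 <|
    hv Sig fun Δ hΔ hΔfin => (hZ.exists_succ_sat_iff h Δ).1 (hfin Δ hΔ hΔfin)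

theorem exists_reflTransGen (hZ : IsBisim K₁ K₂ Z) {s w : K₁.W} {t : K₂.W} (hst : Z s t)
    (hsw : Relation.ReflTransGen K₁.R s w) :
    ∃ v, Relation.ReflTransGen K₂.R t v ∧ Z w v := by
  induction hsw with
  | refl => exact ⟨t, .refl, hst⟩
  | tail _ hww' ih =>
    obtain ⟨v, htv, hwv⟩ := ih
    obtain ⟨v', hvv', hw'v'⟩ := (hZ _ _ hwv).2.1 _ hww'
    exact ⟨v', htv.tail hvv', hw'v'⟩

end IsBisim

theorem msaturated_of_bisimilar
    {P : Type*} (K₁ K₂ : Kripke P) (s : K₁.W) (t : K₂.W)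
    (Z : K₁.W → K₂.W → Prop) (hZ : IsBisim K₁ K₂ Z) (hst : Z s t)
    (hsat : MSaturated K₂ t) :
    MSaturated K₁ s := by
  intro w hsw
  obtain ⟨v, htv, hwv⟩ := hZ.exists_reflTransGen hst hsw
  exact hZ.succSaturated hwv (hsat v htv)
end
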